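/- Let ν = (ν_l, ν_r) be square matrices with zero constant terms over K[[x_1,...,x_p]], and A ∈ Mat(m,n,p). If π_{j−1}(ν_l A − A ν_r) = 0, then π_j(exp(ν_l) A exp(−ν_r)) = π_j A + π_j(ν_l A − A ν_r). -/

import Mathlib

/-!
Write `C = νl A - A νr` and `≡` for congruence modulo matrices whose entries have order `> j + 1`.
The entries of `C` have order `> j` and those of `νl`, `νr` order `≥ 1`, so the recursion
`νl^(i+2) A - A νr^(i+2) = νl (νl^(i+1) A - A νr^(i+1)) + C νr^(i+1)` gives `νl^i A ≡ A νr^i`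
for `i ≥ 2`, hence `exp(νl) A ≡ A exp(νr) + C` on partial sums of the exponential. Multiplying
on the right by `exp(-νr)` gives the claim: `exp(νr) exp(-νr) ≡ 1`, transported from
`e^X e^(-X) = 1` in `K⟦X⟧` by polynomial evaluation, and `C exp(-νr) ≡ C` because
`exp(-νr) - 1` has entries of positive order.
-/

/-- Truncation of a formal power series to total degree `≤ j`. -/
noncomputable def truncLE (K : Type*) [CommRing K] (p j : ℕ)
    (f : MvPowerSeries (Fin p) K) : MvPowerSeries (Fin p) K :=
  fun d => if (d.sum fun _ n => n) ≤ j then MvPowerSeries.coeff d f else 0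

/-- The `j`-jet of a matrix of formal power series. -/
noncomputable def jet {K : Type*} [CommRing K] {m n p : ℕ} (j : ℕ)
    (A : Matrix (Fin m) (Fin n) (MvPowerSeries (Fin p) K)) :
    Matrix (Fin m) (Fin n) (MvPowerSeries (Fin p) K) :=
  A.map (truncLE K p j)

/-- Convergence of a sequence of matrices in the `(x)`-adic (jet) topology. -/
def ConvergesTo {K : Type*} [CommRing K] {m n p : ℕ}
    (s : ℕ → Matrix (Fin m) (Fin n) (MvPowerSeries (Fin p) K))
    (L : Matrix (Fin m) (Fin n) (MvPowerSeries (Fin p) K)) : Prop :=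
  ∀ j : ℕ, ∃ k₀ : ℕ, ∀ k ≥ k₀, jet j (s k) = jet j L

/-- Partial sums of the matrix exponential series `Σ λ^i / i!`. -/
noncomputable def expPartial {K : Type*} [Field K] {m p : ℕ}
    (ν : Matrix (Fin m) (Fin m) (MvPowerSeries (Fin p) K)) (k : ℕ) :
    Matrix (Fin m) (Fin m) (MvPowerSeries (Fin p) K) :=
  ∑ i ∈ Finset.range (k + 1), ((i.factorial : K)⁻¹) • ν ^ i

/-- `E` is the exponential of `ν`, i.e. the limit of the partial sums of `Σ ν^i/i!`. -/
def IsExpOf {K : Type*} [Field K] {m p : ℕ}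
    (ν E : Matrix (Fin m) (Fin m) (MvPowerSeries (Fin p) K)) : Prop :=
  ConvergesTo (expPartial ν) E

open MvPowerSeries

section OrderAtLeast

variable {σ R : Type*} [CommRing R]

def orderIdeal (k : ℕ) : Ideal (MvPowerSeries σ R) where
  carrier := {f | (k : ℕ∞) ≤ f.order}
  zero_mem' := by simp
  add_mem' hf hg := le_trans (le_min hf hg) min_order_le_add
  smul_mem' _ _ hg := hg.trans (le_add_self.trans le_order_mul)

theorem mem_orderIdeal {k : ℕ} {f : MvPowerSeries σ R} :
    f ∈ orderIdeal k ↔ (k : ℕ∞) ≤ f.order :=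
  Iff.rfl

theorem mul_mem_orderIdeal {k l : ℕ} {f g : MvPowerSeries σ R} (hf : f ∈ orderIdeal k)
    (hg : g ∈ orderIdeal l) : f * g ∈ orderIdeal (k + l) :=
  le_trans (by push_cast; exact add_le_add hf hg) le_order_mul

variable {α β γ : Type*}

def orderAtLeast (k : ℕ) : Submodule R (Matrix α β (MvPowerSeries σ R)) where
  carrier := {X | ∀ a b, X a b ∈ orderIdeal k}
  zero_mem' _ _ := zero_mem _
  add_mem' hX hY a b := add_mem (hX a b) (hY a b)
  smul_mem' c _ hX a b := (orderIdeal k).smul_of_tower_mem c (hX a b)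

theorem mem_orderAtLeast_zero (X : Matrix α β (MvPowerSeries σ R)) : X ∈ orderAtLeast 0 :=
  fun _ _ => by simp [mem_orderIdeal]

theorem orderAtLeast_anti {k l : ℕ} (h : k ≤ l) :
    (orderAtLeast l : Submodule R (Matrix α β (MvPowerSeries σ R))) ≤ orderAtLeast k :=
  fun _ hX a b => le_trans (by exact_mod_cast h) (mem_orderIdeal.mp (hX a b))

theorem mul_mem_orderAtLeast [Fintype β] {k l : ℕ} {X : Matrix α β (MvPowerSeries σ R)}
    {Y : Matrix β γ (MvPowerSeries σ R)} (hX : X ∈ orderAtLeast k) (hY : Y ∈ orderAtLeast l) :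
    X * Y ∈ orderAtLeast (k + l) := fun a c =>
  Ideal.sum_mem _ fun b _ => mul_mem_orderIdeal (hX a b) (hY b c)

theorem mul_mem_orderAtLeast_of_left [Fintype β] {k : ℕ} {X : Matrix α β (MvPowerSeries σ R)}
    (hX : X ∈ orderAtLeast k) (Y : Matrix β γ (MvPowerSeries σ R)) : X * Y ∈ orderAtLeast k :=
  mul_mem_orderAtLeast hX (mem_orderAtLeast_zero Y)

theorem mul_mem_orderAtLeast_of_right [Fintype β] {k : ℕ} (X : Matrix α β (MvPowerSeries σ R))
    {Y : Matrix β γ (MvPowerSeries σ R)} (hY : Y ∈ orderAtLeast k) : X * Y ∈ orderAtLeast k := by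
  simpa using mul_mem_orderAtLeast (mem_orderAtLeast_zero X) hY

theorem pow_mem_orderAtLeast [Fintype α] [DecidableEq α] {X : Matrix α α (MvPowerSeries σ R)}
    (hX : X ∈ orderAtLeast 1) (i : ℕ) : X ^ i ∈ orderAtLeast i := by
  induction i with
  | zero => exact mem_orderAtLeast_zero _
  | succ i ih => rw [pow_succ]; exact mul_mem_orderAtLeast ih hX

theorem mem_orderAtLeast_one_iff {X : Matrix α β (MvPowerSeries σ R)} :
    X ∈ orderAtLeast 1 ↔ ∀ a b, constantCoeff (X a b) = 0 :=
  forall₂_congr fun _ _ => by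
    simpa [mem_orderIdeal] using one_le_order_iff_constCoeff_eq_zero

theorem aeval_mem_orderAtLeast [Fintype α] [DecidableEq α] {ν : Matrix α α (MvPowerSeries σ R)}
    (hν : ν ∈ orderAtLeast 1) {k : ℕ} {P : Polynomial R} (hP : ∀ i < k, P.coeff i = 0) :
    Polynomial.aeval ν P ∈ orderAtLeast k := by
  rw [Polynomial.aeval_eq_sum_range]
  refine Submodule.sum_mem _ fun i _ => ?_
  by_cases hik : i < k
  · simp [hP i hik]
  · exact Submodule.smul_mem _ _ (orderAtLeast_anti (not_lt.mp hik) (pow_mem_orderAtLeast hν i))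

theorem pow_mul_sub_mul_pow_mem [Fintype α] [DecidableEq α] [Fintype β] [DecidableEq β]
    {νl : Matrix α α (MvPowerSeries σ R)} {νr : Matrix β β (MvPowerSeries σ R)}
    {A : Matrix α β (MvPowerSeries σ R)} {c : ℕ}
    (hνl : νl ∈ orderAtLeast 1) (hνr : νr ∈ orderAtLeast 1)
    (hC : νl * A - A * νr ∈ orderAtLeast c) (i : ℕ) :
    νl ^ (i + 1) * A - A * νr ^ (i + 1) ∈ orderAtLeast (c + i) := by
  induction i with
  | zero => simpa using hC
  | succ i ih =>
    have split : νl ^ (i + 2) * A - A * νr ^ (i + 2)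
        = νl * (νl ^ (i + 1) * A - A * νr ^ (i + 1)) + (νl * A - A * νr) * νr ^ (i + 1) := by
      simp only [pow_succ' _ (i + 1), Matrix.mul_sub, Matrix.sub_mul, Matrix.mul_assoc]
      abel
    rw [split]
    refine add_mem ?_ ?_
    · exact orderAtLeast_anti (by omega) (mul_mem_orderAtLeast hνl ih)
    · exact mul_mem_orderAtLeast hC (pow_mem_orderAtLeast hνr _)

theorem mul_mul_sub_mul_mul_mem {δ : Type*} [Fintype β] [Fintype γ]
    {E P : Matrix α β (MvPowerSeries σ R)} {F Q : Matrix γ δ (MvPowerSeries σ R)}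
    {J : ℕ} (hE : E - P ∈ orderAtLeast J) (hF : F - Q ∈ orderAtLeast J)
    (A : Matrix β γ (MvPowerSeries σ R)) : E * A * F - P * A * Q ∈ orderAtLeast J := by
  have split : E * A * F - P * A * Q = (E - P) * (A * F) + P * A * (F - Q) := by
    simp only [Matrix.sub_mul, Matrix.mul_sub, Matrix.mul_assoc]
    abel
  rw [split]
  exact add_mem (mul_mem_orderAtLeast_of_left hE _) (mul_mem_orderAtLeast_of_right _ hF)

end OrderAtLeast

theorem PowerSeries.aeval_trunc_eq_sum_range {R S : Type*} [CommSemiring R] [Semiring S]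
    [Algebra R S] (s : S) (n : ℕ) (f : PowerSeries R) :
    Polynomial.aeval s (trunc n f) = ∑ i ∈ Finset.range n, coeff i f • s ^ i := by
  simp [Polynomial.aeval_def, PowerSeries.eval₂_trunc_eq_sum_range, Algebra.smul_def]

section Jet

variable {K : Type*} [CommRing K] {m n p : ℕ}

theorem coeff_truncLE (j : ℕ) (f : MvPowerSeries (Fin p) K) (d : Fin p →₀ ℕ) :
    coeff d (truncLE K p j f) = if d.degree ≤ j then coeff d f else 0 :=
  rfl

theorem jet_eq_jet_iff {J : ℕ} {X Y : Matrix (Fin m) (Fin n) (MvPowerSeries (Fin p) K)} :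
    jet J X = jet J Y ↔ X - Y ∈ orderAtLeast (J + 1) := by
  refine ⟨fun h a b => nat_le_order fun d hd => ?_, fun h => ?_⟩
  · have := congrArg (coeff d) (congrFun (congrFun h a) b)
    simpa [jet, coeff_truncLE, Nat.lt_succ_iff.mp hd, sub_eq_zero] using this
  · ext a b d
    simp only [jet, Matrix.map_apply, coeff_truncLE]
    split_ifs with hd
    · rw [← sub_eq_zero, ← map_sub]
      exact coeff_of_lt_order ((Nat.cast_lt.mpr (Nat.lt_succ_of_le hd)).trans_le (h a b))
    · rfl

theorem jet_zero (J : ℕ) : jet J (0 : Matrix (Fin m) (Fin n) (MvPowerSeries (Fin p) K)) = 0 := by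
  ext a b d
  simp [jet, coeff_truncLE]

theorem jet_add (J : ℕ) (X Y : Matrix (Fin m) (Fin n) (MvPowerSeries (Fin p) K)) :
    jet J (X + Y) = jet J X + jet J Y := by
  ext a b d
  simp only [jet, Matrix.map_apply, Matrix.add_apply, map_add, coeff_truncLE]
  split_ifs <;> simp

theorem jet_eq_zero_iff {J : ℕ} {X : Matrix (Fin m) (Fin n) (MvPowerSeries (Fin p) K)} :
    jet J X = 0 ↔ X ∈ orderAtLeast (J + 1) := by
  rw [← jet_zero J, jet_eq_jet_iff, sub_zero]

theorem ConvergesTo.eventually_sub_mem {s : ℕ → Matrix (Fin m) (Fin n) (MvPowerSeries (Fin p) K)}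
    {L : Matrix (Fin m) (Fin n) (MvPowerSeries (Fin p) K)} (h : ConvergesTo s L) (J : ℕ) :
    ∀ᶠ k in Filter.atTop, L - s k ∈ orderAtLeast (J + 1) := by
  obtain ⟨k₀, hk₀⟩ := h J
  exact Filter.eventually_atTop.mpr ⟨k₀, fun k hk => jet_eq_jet_iff.mp (hk₀ k hk).symm⟩

end Jet

section Exponential

variable {K : Type*} [Field K] {m n p : ℕ}

theorem expPartial_sub_one_mem {ν : Matrix (Fin m) (Fin m) (MvPowerSeries (Fin p) K)}
    (hν : ν ∈ orderAtLeast 1) (k : ℕ) : expPartial ν k - 1 ∈ orderAtLeast 1 := by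
  rw [expPartial, Finset.sum_range_succ']
  simp only [Nat.factorial_zero, Nat.cast_one, inv_one, pow_zero, one_smul, add_sub_cancel_right]
  exact Submodule.sum_mem _ fun i _ => Submodule.smul_mem _ _
    (orderAtLeast_anti (by omega) (pow_mem_orderAtLeast hν (i + 1)))

theorem expPartial_mul_sub_mul_expPartial_mem
    {νl : Matrix (Fin m) (Fin m) (MvPowerSeries (Fin p) K)}
    {νr : Matrix (Fin n) (Fin n) (MvPowerSeries (Fin p) K)}
    {A : Matrix (Fin m) (Fin n) (MvPowerSeries (Fin p) K)} {c k : ℕ}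
    (hνl : νl ∈ orderAtLeast 1) (hνr : νr ∈ orderAtLeast 1)
    (hC : νl * A - A * νr ∈ orderAtLeast c) (hk : 1 ≤ k) :
    expPartial νl k * A - A * expPartial νr k - (νl * A - A * νr) ∈ orderAtLeast (c + 1) := by
  obtain ⟨k, rfl⟩ := Nat.exists_eq_add_of_le' hk
  have hsum : expPartial νl (k + 1) * A - A * expPartial νr (k + 1)
      = ∑ i ∈ Finset.range (k + 2), ((i.factorial : K)⁻¹) • (νl ^ i * A - A * νr ^ i) := by
    rw [expPartial, expPartial, Matrix.sum_mul, Matrix.mul_sum, ← Finset.sum_sub_distrib]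
    simp only [Matrix.smul_mul, Matrix.mul_smul, smul_sub]
  rw [hsum, Finset.sum_range_succ', Finset.sum_range_succ']
  simp only [pow_zero, Matrix.one_mul, Matrix.mul_one, sub_self, smul_zero, add_zero, zero_add,
    pow_one, Nat.factorial_one, Nat.cast_one, inv_one, one_smul, add_sub_cancel_right]
  exact Submodule.sum_mem _ fun i _ => Submodule.smul_mem _ _
    (orderAtLeast_anti (by omega) (pow_mul_sub_mul_pow_mem hνl hνr hC (i + 1)))

variable [CharZero K]

theorem expPartial_eq_aeval_trunc_exp (ν : Matrix (Fin m) (Fin m) (MvPowerSeries (Fin p) K))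
    (k : ℕ) :
    expPartial ν k = Polynomial.aeval ν (PowerSeries.trunc (k + 1) (PowerSeries.exp K)) := by
  simp [expPartial, PowerSeries.aeval_trunc_eq_sum_range]

theorem expPartial_neg_eq_aeval_trunc_exp (ν : Matrix (Fin m) (Fin m) (MvPowerSeries (Fin p) K))
    (k : ℕ) : expPartial (-ν) k
      = Polynomial.aeval ν
          (PowerSeries.trunc (k + 1) (PowerSeries.evalNegHom (PowerSeries.exp K))) := by
  simp only [expPartial, PowerSeries.aeval_trunc_eq_sum_range, PowerSeries.evalNegHom,
    PowerSeries.coeff_rescale]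
  refine Finset.sum_congr rfl fun i _ => ?_
  rw [← neg_one_smul K ν, smul_pow, smul_smul, mul_comm]
  simp

theorem expPartial_mul_expPartial_neg_sub_one_mem
    {ν : Matrix (Fin m) (Fin m) (MvPowerSeries (Fin p) K)} (hν : ν ∈ orderAtLeast 1) (k : ℕ) :
    expPartial ν k * expPartial (-ν) k - 1 ∈ orderAtLeast (k + 1) := by
  rw [expPartial_eq_aeval_trunc_exp, expPartial_neg_eq_aeval_trunc_exp, ← map_mul,
    ← map_one (Polynomial.aeval (R := K) ν), ← map_sub]
  refine aeval_mem_orderAtLeast hν fun i hi => ?_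
  rw [Polynomial.coeff_sub, ← Polynomial.coeff_coe, Polynomial.coe_mul,
    ← PowerSeries.coeff_mul_eq_coeff_trunc_mul_trunc _ _ hi, PowerSeries.exp_mul_exp_neg_eq_one,
    ← Polynomial.coeff_coe, Polynomial.coe_one, sub_self]

theorem expPartial_mul_mul_expPartial_neg_sub_mem
    {νl : Matrix (Fin m) (Fin m) (MvPowerSeries (Fin p) K)}
    {νr : Matrix (Fin n) (Fin n) (MvPowerSeries (Fin p) K)}
    {A : Matrix (Fin m) (Fin n) (MvPowerSeries (Fin p) K)} {c k : ℕ}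
    (hνl : νl ∈ orderAtLeast 1) (hνr : νr ∈ orderAtLeast 1)
    (hC : νl * A - A * νr ∈ orderAtLeast (c + 1)) (hk : c + 1 ≤ k) :
    expPartial νl k * A * expPartial (-νr) k - (A + (νl * A - A * νr))
      ∈ orderAtLeast (c + 1 + 1) := by
  set C := νl * A - A * νr
  set Q := expPartial (-νr) k
  have split : expPartial νl k * A * Q - (A + C)
      = (expPartial νl k * A - A * expPartial νr k - C) * Q
        + A * (expPartial νr k * Q - 1) + C * (Q - 1) := by
    simp only [Matrix.sub_mul, Matrix.mul_sub, Matrix.mul_assoc, Matrix.mul_one]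
    abel
  rw [split]
  refine add_mem (add_mem ?_ ?_) ?_
  · exact mul_mem_orderAtLeast_of_left
      (expPartial_mul_sub_mul_expPartial_mem hνl hνr hC (by omega)) Q
  · exact mul_mem_orderAtLeast_of_right A <| orderAtLeast_anti (by omega)
      (expPartial_mul_expPartial_neg_sub_one_mem hνr k)
  · exact mul_mem_orderAtLeast hC (expPartial_sub_one_mem (neg_mem hνr) k)

end Exponential

/-- If `π_j(ν_l A - A ν_r) = 0` then
`π_{j+1}(exp(ν_l) A exp(-ν_r)) = π_{j+1} A + π_{j+1}(ν_l A - A ν_r)`. -/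
theorem jet_linearization {K : Type*} [Field K] [CharZero K] {m n p : ℕ}
    (νl : Matrix (Fin m) (Fin m) (MvPowerSeries (Fin p) K))
    (νr : Matrix (Fin n) (Fin n) (MvPowerSeries (Fin p) K))
    (hl : ∀ a b, MvPowerSeries.constantCoeff (νl a b) = 0)
    (hr : ∀ a b, MvPowerSeries.constantCoeff (νr a b) = 0)
    (El : Matrix (Fin m) (Fin m) (MvPowerSeries (Fin p) K))
    (Er : Matrix (Fin n) (Fin n) (MvPowerSeries (Fin p) K))
    (hEl : IsExpOf νl El) (hEr : IsExpOf (-νr) Er)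
    (A : Matrix (Fin m) (Fin n) (MvPowerSeries (Fin p) K)) (j : ℕ)
    (h : jet j (νl * A - A * νr) = 0) :
    jet (j + 1) (El * A * Er) = jet (j + 1) A + jet (j + 1) (νl * A - A * νr) := by
  obtain ⟨k, ⟨hkl, hkr⟩, hk⟩ := ((hEl.eventually_sub_mem (j + 1)).and
    (hEr.eventually_sub_mem (j + 1))).and (Filter.eventually_ge_atTop (j + 1)) |>.exists
  have hlim := mul_mul_sub_mul_mul_mem hkl hkr A
  have hpartial := expPartial_mul_mul_expPartial_neg_sub_mem (mem_orderAtLeast_one_iff.mpr hl)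
    (mem_orderAtLeast_one_iff.mpr hr) (jet_eq_zero_iff.mp h) hk
  rw [← jet_add, jet_eq_jet_iff, ← sub_add_sub_cancel _ (expPartial νl k * A * expPartial (-νr) k)]
  exact add_mem hlim hpartial
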